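/- On the polynomial ring P = F[a,b,c,d,e] over a field F of characteristic ≠ 2,3, define the operators L(a) = M_a, L(b) = M_b − M_c D_a + (1/3) M_e D_a D_d, L(c) = M_c, L(d) = M_d − M_e D_c − (1/3) M_e D_a D_b, L(e) = M_e, ρ(a) = −M_c D_b + (1/2) M_e D_b D_d, ρ(b) = M_c D_a − (1/2) M_e D_a D_d, ρ(c) = −M_e D_d, ρ(d) = M_e D_c + (1/2) M_e D_a D_b, ρ(e) = 0. Then the following commutator identities hold (as operators on P): [L(a),L(b)] = M_c − (1/3) M_e D_d, [L(a),L(d)] = (1/3) M_e D_b, [L(b),L(d)] = −(1/3) M_e D_a, [L(c),L(d)] = M_e, [ρ(a),ρ(d)] = M_e D_b, [ρ(b),ρ(d)] = −M_e D_a, [L(a),ρ(b)] = −M_c + (1/2) M_e D_d, [L(a),ρ(d)] = −(1/2) M_e D_b, [L(b),ρ(a)] = M_c − (1/2) M_e D_d, [L(b),ρ(d)] = (1/2) M_e D_a, [L(c),ρ(d)] = −M_e, [L(d),ρ(a)] = (1/2) M_e D_b, [L(d),ρ(b)] = −(1/2) M_e D_a, [L(d),ρ(c)] = M_e, and all other commutators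 among {L(x), ρ(x) : x ∈ {a,b,c,d,e}} vanish. -/

import Mathlib

open MvPolynomial

/-- The five variables `a,b,c,d,e` of `P = F[a,b,c,d,e]`. -/
inductive Var : Type | a | b | c | d | e
deriving DecidableEq

variable (F : Type*) [Field F]

/-- Multiplication by the variable `v` on `P`. -/
noncomputable def Mo (v : Var) : Module.End F (MvPolynomial Var F) :=
  LinearMap.mulLeft F (X v)

/-- Partial differentiation with respect to `v` on `P`. -/
noncomputable def Do (v : Var) : Module.End F (MvPolynomial Var F) :=
  (pderiv v).toLinearMap

/-- The left-multiplication operators `L(x)` of Proposition `abcde-brackets`. -/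
noncomputable def Lop : Var → Module.End F (MvPolynomial Var F)
  | .a => Mo F .a
  | .b => Mo F .b - Mo F .c * Do F .a + (3 : F)⁻¹ • (Mo F .e * Do F .a * Do F .d)
  | .c => Mo F .c
  | .d => Mo F .d - Mo F .e * Do F .c - (3 : F)⁻¹ • (Mo F .e * Do F .a * Do F .b)
  | .e => Mo F .e

/-- The right-bracket operators `ρ(x)` of Proposition `abcde-brackets`. -/
noncomputable def Pop : Var → Module.End F (MvPolynomial Var F)
  | .a => -(Mo F .c * Do F .b) + (2 : F)⁻¹ • (Mo F .e * Do F .b * Do F .d)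
  | .b => Mo F .c * Do F .a - (2 : F)⁻¹ • (Mo F .e * Do F .a * Do F .d)
  | .c => -(Mo F .e * Do F .d)
  | .d => Mo F .e * Do F .c + (2 : F)⁻¹ • (Mo F .e * Do F .a * Do F .b)
  | .e => 0

/-- Table of the commutators `[L(x), L(y)]`. -/
noncomputable def CLL : Var → Var → Module.End F (MvPolynomial Var F)
  | .a, .b => Mo F .c - (3 : F)⁻¹ • (Mo F .e * Do F .d)
  | .b, .a => -(Mo F .c - (3 : F)⁻¹ • (Mo F .e * Do F .d))
  | .a, .d => (3 : F)⁻¹ • (Mo F .e * Do F .b)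
  | .d, .a => -((3 : F)⁻¹ • (Mo F .e * Do F .b))
  | .b, .d => -((3 : F)⁻¹ • (Mo F .e * Do F .a))
  | .d, .b => (3 : F)⁻¹ • (Mo F .e * Do F .a)
  | .c, .d => Mo F .e
  | .d, .c => -(Mo F .e)
  | _, _ => 0

/-- Table of the commutators `[ρ(x), ρ(y)]`. -/
noncomputable def CRR : Var → Var → Module.End F (MvPolynomial Var F)
  | .a, .d => Mo F .e * Do F .b
  | .d, .a => -(Mo F .e * Do F .b)
  | .b, .d => -(Mo F .e * Do F .a)
  | .d, .b => Mo F .e * Do F .a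
  | _, _ => 0

/-- Table of the commutators `[L(x), ρ(y)]`. -/
noncomputable def CLR : Var → Var → Module.End F (MvPolynomial Var F)
  | .a, .b => -(Mo F .c) + (2 : F)⁻¹ • (Mo F .e * Do F .d)
  | .a, .d => -((2 : F)⁻¹ • (Mo F .e * Do F .b))
  | .b, .a => Mo F .c - (2 : F)⁻¹ • (Mo F .e * Do F .d)
  | .b, .d => (2 : F)⁻¹ • (Mo F .e * Do F .a)
  | .c, .d => -(Mo F .e)
  | .d, .a => (2 : F)⁻¹ • (Mo F .e * Do F .b)
  | .d, .b => -((2 : F)⁻¹ • (Mo F .e * Do F .a))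
  | .d, .c => Mo F .e
  | _, _ => 0

/-!
The operators `M_v` and `D_v` satisfy the canonical commutation relations
`[M_u, M_v] = [D_u, D_v] = 0` and `[D_u, M_v] = δ_uv`, and every `L(x)` and `ρ(x)` is a
noncommutative polynomial in them. Expanding a commutator by bilinearity and the Leibniz rules
`[a, bc] = [a, b] c + b [a, c]`, `[ab, c] = a [b, c] + [a, c] b` reduces it to these relations.
What remains are coefficient identities such as `1 - 2 · 3⁻¹ = 3⁻¹` and `1 - 2⁻¹ = 2⁻¹`, which is
where the characteristic assumptions enter.
-/

attribute [local instance] LieRing.ofAssociativeRing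

namespace Ring

variable {A : Type*} [Ring A]

/- Unlike `(lie_def a b).symm`, this produces the bracket of the local `LieRing` instance, which is
the one `lie_add`, `lie_sub`, ... can rewrite. -/
theorem mul_sub_mul_eq_lie (a b : A) : a * b - b * a = ⁅a, b⁆ := rfl

theorem lie_mul (a b c : A) : ⁅a, b * c⁆ = ⁅a, b⁆ * c + b * ⁅a, c⁆ := by
  simp only [lie_def]; noncomm_ring

theorem mul_lie (a b c : A) : ⁅a * b, c⁆ = a * ⁅b, c⁆ + ⁅a, c⁆ * b := by
  simp only [lie_def]; noncomm_ring

end Ring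

/- On `Module.End R (MvPolynomial σ R)` the instances built by the ring and Lie structures agree
with the ones carried by the terms only up to unfolding, so `simp` cannot use `mul_neg`,
`zero_lie`, `lie_smul`, ... there. Restated for `Module.End R M` they match syntactically. -/
namespace Module.End

variable {R M : Type*} [CommRing R] [AddCommGroup M] [Module R M]

theorem mul_neg (f g : Module.End R M) : f * -g = -(f * g) :=
  _root_.mul_neg f g

theorem neg_mul (f g : Module.End R M) : -f * g = -(f * g) :=
  _root_.neg_mul f g

theorem zero_lie (f : Module.End R M) : ⁅(0 : Module.End R M), f⁆ = 0 :=
  _root_.zero_lie f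

theorem lie_smul (t : R) (f g : Module.End R M) : ⁅f, t • g⁆ = t • ⁅f, g⁆ :=
  _root_.lie_smul t f g

theorem smul_lie (t : R) (f g : Module.End R M) : ⁅t • f, g⁆ = t • ⁅f, g⁆ :=
  _root_.smul_lie t f g

end Module.End

namespace LinearMap

variable {R A : Type*} [CommRing R] [CommRing A] [Algebra R A]

theorem lie_mulLeft_mulLeft (a b : A) : ⁅mulLeft R a, mulLeft R b⁆ = 0 := by
  ext c
  simp [Ring.lie_def, mul_left_comm]

end LinearMap

namespace Derivation

variable {R A : Type*} [CommRing R] [CommRing A] [Algebra R A]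

theorem lie_toLinearMap_mulLeft (D : Derivation R A A) (a : A) :
    ⁅(D : Module.End R A), LinearMap.mulLeft R a⁆ = LinearMap.mulLeft R (D a) := by
  ext b
  simp only [Ring.lie_def, LinearMap.sub_apply, Module.End.mul_apply, LinearMap.mulLeft_apply,
    coeFn_coe, leibniz, smul_eq_mul, add_sub_cancel_left]
  ring

end Derivation

namespace MvPolynomial

variable {σ R : Type*} [CommRing R] [DecidableEq σ]

theorem lie_pderiv_pderiv (i j : σ) :
    ⁅((pderiv i : Derivation R (MvPolynomial σ R) (MvPolynomial σ R)) :
        Module.End R (MvPolynomial σ R)),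
      ((pderiv j : Derivation R (MvPolynomial σ R) (MvPolynomial σ R)) :
        Module.End R (MvPolynomial σ R))⁆ = 0 := by
  suffices ⁅pderiv i, pderiv j⁆ = (0 : Derivation R (MvPolynomial σ R) _) by
    rw [← Derivation.commutator_coe_linear_map, this]; rfl
  refine derivation_ext fun k => ?_
  simp only [Derivation.commutator_apply, pderiv_X, Pi.single_apply]
  split_ifs <;> simp

end MvPolynomial

theorem lie_Mo_Mo (u v : Var) : ⁅Mo F u, Mo F v⁆ = 0 :=
  LinearMap.lie_mulLeft_mulLeft _ _

theorem lie_Do_Do (u v : Var) : ⁅Do F u, Do F v⁆ = 0 :=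
  MvPolynomial.lie_pderiv_pderiv u v

theorem lie_Do_Mo (u v : Var) : ⁅Do F u, Mo F v⁆ = if u = v then 1 else 0 := by
  rw [Do, Mo, Derivation.lie_toLinearMap_mulLeft, pderiv_X]
  split_ifs with h <;> simp [h, Module.End.one_eq_id]

theorem lie_Mo_Do (u v : Var) : ⁅Mo F u, Do F v⁆ = -⁅Do F v, Mo F u⁆ :=
  (lie_skew _ _).symm

set_option maxHeartbeats 1000000 in
/-- Corollary `operatorcommutators`: the complete table of commutators among
the operators `L(x)` and `ρ(x)` for `x ∈ {a,b,c,d,e}`; the listed nonzero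
values occur and all other commutators vanish. -/
theorem stmt15 (h2 : ringChar F ≠ 2) (h3 : ringChar F ≠ 3) (x y : Var) :
    Lop F x * Lop F y - Lop F y * Lop F x = CLL F x y ∧
    Pop F x * Pop F y - Pop F y * Pop F x = CRR F x y ∧
    Lop F x * Pop F y - Pop F y * Lop F x = CLR F x y := by
  have h2F : (2 : F) ≠ 0 := by
    exact_mod_cast CharP.cast_ne_zero_of_ne_of_prime F Nat.prime_two h2
  have h3F : (3 : F) ≠ 0 := by
    exact_mod_cast CharP.cast_ne_zero_of_ne_of_prime F Nat.prime_three h3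
  simp only [Ring.mul_sub_mul_eq_lie]
  cases x <;> cases y <;> refine ⟨?_, ?_, ?_⟩ <;>
    simp only [Lop, Pop, CLL, CRR, CLR, lie_add, add_lie, lie_sub, sub_lie, lie_neg, neg_lie,
      lie_zero, Module.End.zero_lie, Module.End.lie_smul, Module.End.smul_lie, Ring.lie_mul,
      Ring.mul_lie, lie_Mo_Mo, lie_Do_Do, lie_Do_Mo, lie_Mo_Do, reduceCtorEq, if_true, if_false,
      mul_zero, zero_mul, add_zero, zero_add, smul_zero, neg_zero, sub_zero, zero_sub,
      Module.End.mul_neg, Module.End.neg_mul, neg_neg, mul_assoc]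
  all_goals match_scalars <;> field_simp <;> ring
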